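/- Under the hypotheses of the previous theorem (feature matrix X = [x^1,…,x^n] ∈ ℝ^{d×n}, K-partition 𝓕 = {F_1,…,F_K} of [d] with row-submatrices P_k and centroids μ^k, clustering errors err_k := ‖P_k − 1_{d_k}(μ^k)^⊤‖_F, and a loss ℓ that is L-Lipschitz in its first argument for every label y), for every w ∈ ℝ^d, setting w_0 := max_{k∈[K]} ‖w_{F_k}^⊥‖_2, there exists w̃ ∈ ℝ^K such that for all S ⊆ [n]: sqrt( Σ_{i∈S} ( ℓ(w^⊤x^i; y^i) − ℓ(w̃^⊤x̃^i; y^i) )² ) ≤ L · w_0 · Σ_{k=1}^K err_k. -/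

import Mathlib

open Finset Real

/-!
Take `wt k` to be the mean of `w` over the cluster `F k`. The centred weights `w j - wt k` sum to
zero on each cluster, so they annihilate the centroid `μ k`, and the prediction gap at sample `i` is
`∑ k, ∑ j ∈ F k, (w j - wt k) * (X j i - μ k i)`. The Lipschitz bound reduces the loss gap to this
prediction gap, the triangle inequality in `ℓ²` splits it over the clusters, and Cauchy–Schwarz
bounds the `k`-th piece by `‖w_{F_k}^⊥‖₂ * err_k ≤ w₀ * err_k`.
-/

section

variable {ι κ : Type*}

theorem Finset.sum_eq_sum_sum_of_cover [Fintype ι] [Fintype κ] [DecidableEq ι] {M : Type*}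
    [AddCommMonoid M] {F : κ → Finset ι} (hdisj : ∀ k l, k ≠ l → Disjoint (F k) (F l))
    (hcover : ∀ j, ∃ k, j ∈ F k) (g : ι → M) :
    ∑ j, g j = ∑ k, ∑ j ∈ F k, g j := by
  have huniv : univ.biUnion F = univ := eq_univ_of_forall fun j => by simpa using hcover j
  rw [← huniv, sum_biUnion fun k _ l _ hkl => hdisj k l hkl]

theorem Finset.sum_sub_mean_mul_sub (s : Finset ι) (w x : ι → ℝ) (c : ℝ) :
    ∑ j ∈ s, (w j - (∑ j' ∈ s, w j') / #s) * (x j - c) =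
      ∑ j ∈ s, w j * x j - (∑ j' ∈ s, w j') / #s * ∑ j ∈ s, x j := by
  rcases s.eq_empty_or_nonempty with rfl | hs
  · simp
  set m := (∑ j' ∈ s, w j') / #s
  have hcentred : ∑ j ∈ s, (w j - m) = 0 := by
    rw [sum_sub_distrib, sum_const, nsmul_eq_mul, mul_div_cancel₀ _ (by simp [hs.ne_empty]),
      sub_self]
  calc ∑ j ∈ s, (w j - m) * (x j - c)
      = ∑ j ∈ s, (w j - m) * x j - (∑ j ∈ s, (w j - m)) * c := by
        rw [sum_mul, ← sum_sub_distrib]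
        simp only [mul_sub]
    _ = ∑ j ∈ s, w j * x j - m * ∑ j ∈ s, x j := by
        simp only [hcentred, zero_mul, sub_zero, sub_mul, sum_sub_distrib, mul_sum]

noncomputable def clusterMean (F : κ → Finset ι) (w : ι → ℝ) (k : κ) : ℝ :=
  (∑ j ∈ F k, w j) / #(F k)

theorem sum_mul_sub_sum_clusterMean_mul [Fintype ι] [Fintype κ] [DecidableEq ι]
    {F : κ → Finset ι} (hdisj : ∀ k l, k ≠ l → Disjoint (F k) (F l))
    (hcover : ∀ j, ∃ k, j ∈ F k) (w x : ι → ℝ) (c : κ → ℝ) :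
    ∑ j, w j * x j - ∑ k, clusterMean F w k * ∑ j ∈ F k, x j =
      ∑ k, ∑ j ∈ F k, (w j - clusterMean F w k) * (x j - c k) := by
  simp only [clusterMean, sum_sub_mean_mul_sub, sum_sub_distrib,
    ← sum_eq_sum_sum_of_cover hdisj hcover]

theorem Real.sqrt_sum_sq_sum_le [Fintype ι] (s : Finset κ) (g : κ → ι → ℝ) :
    √(∑ i, (∑ k ∈ s, g k i) ^ 2) ≤ ∑ k ∈ s, √(∑ i, g k i ^ 2) := by
  simpa [EuclideanSpace.norm_eq] using norm_sum_le s fun k => WithLp.toLp 2 (g k)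

theorem Real.sqrt_sum_sq_sum_mul_le {ι' : Type*} (s : Finset ι) (t : Finset ι') (a : ι → ℝ)
    (b : ι → ι' → ℝ) :
    √(∑ i ∈ t, (∑ j ∈ s, a j * b j i) ^ 2) ≤
      √(∑ j ∈ s, a j ^ 2) * √(∑ j ∈ s, ∑ i ∈ t, b j i ^ 2) := by
  rw [← sqrt_mul (sum_nonneg fun _ _ => sq_nonneg _), sum_comm (s := s), mul_sum]
  gcongr with i
  exact sum_mul_sq_le_sq_mul_sq s _ _

theorem Real.sqrt_sum_sq_sub_le_of_lipschitz {α : Type*} {f : ℝ → α → ℝ} {L : ℝ} (hL : 0 ≤ L)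
    (hLip : ∀ a s t, |f s a - f t a| ≤ L * |s - t|) (S : Finset ι) (y : ι → α) (u v : ι → ℝ) :
    √(∑ i ∈ S, (f (u i) (y i) - f (v i) (y i)) ^ 2) ≤ L * √(∑ i ∈ S, (u i - v i) ^ 2) := by
  rw [← sqrt_sq hL, ← sqrt_mul (sq_nonneg L), mul_sum]
  gcongr with i
  rw [← sq_abs, ← sq_abs (u i - v i), ← mul_pow]
  gcongr
  exact hLip ..

end

/-- Simplified DEFRAG-X guarantee.
Under the hypotheses of Statement 1, with `w₀ := max_k ‖w_{F_k}^⊥‖₂`, there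
exists `wt ∈ ℝ^K` such that for all `S ⊆ [n]`:
`sqrt(∑_{i∈S} (ℓ(w^⊤x^i;y^i) - ℓ(wt^⊤x̃^i;y^i))²) ≤ L · w₀ · ∑_k err_k`. -/
theorem stmt_2 {d n K : ℕ} {α : Type*} (hK : 0 < K)
    (X : Matrix (Fin d) (Fin n) ℝ)
    (F : Fin K → Finset (Fin d))
    (hdisj : ∀ k l : Fin K, k ≠ l → Disjoint (F k) (F l))
    (hcover : ∀ j : Fin d, ∃ k : Fin K, j ∈ F k)
    (μ : Fin K → Fin n → ℝ)
    (y : Fin n → α)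
    (f : ℝ → α → ℝ) (L : ℝ)
    (hLip : ∀ (a : α) (s t : ℝ), |f s a - f t a| ≤ L * |s - t|)
    (w : Fin d → ℝ) :
    ∃ wt : Fin K → ℝ, ∀ S : Finset (Fin n),
      Real.sqrt (∑ i ∈ S,
          (f (∑ j : Fin d, w j * X j i) (y i) -
            f (∑ k : Fin K, wt k * ∑ j ∈ F k, X j i) (y i)) ^ 2) ≤
        L *
          (Finset.univ.sup' ⟨⟨0, hK⟩, Finset.mem_univ _⟩ fun k : Fin K =>
            Real.sqrt (∑ j ∈ F k, (w j - (∑ j' ∈ F k, w j') / ((F k).card : ℝ)) ^ 2)) *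
          ∑ k : Fin K, Real.sqrt (∑ j ∈ F k, ∑ i : Fin n, (X j i - μ k i) ^ 2) := by
  refine ⟨clusterMean F w, fun S => ?_⟩
  -- `hLip` forces `0 ≤ L` only once some label `y i` exists.
  obtain rfl | hn := n.eq_zero_or_pos
  · simp [S.eq_empty_of_isEmpty]
  have hL : 0 ≤ L := (abs_nonneg _).trans (by simpa using hLip (y ⟨0, hn⟩) 1 0)
  have hgap (i : Fin n) := sum_mul_sub_sum_clusterMean_mul hdisj hcover w (X · i) (μ · i)
  calc _ ≤ L * √(∑ i ∈ S, (∑ j, w j * X j i - ∑ k, clusterMean F w k * ∑ j ∈ F k, X j i) ^ 2) :=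
        sqrt_sum_sq_sub_le_of_lipschitz hL hLip S y _ _
    _ ≤ L * √(∑ i, (∑ k, ∑ j ∈ F k, (w j - clusterMean F w k) * (X j i - μ k i)) ^ 2) := by
        simp_rw [hgap]
        exact mul_le_mul_of_nonneg_left (sqrt_le_sqrt <|
          sum_le_sum_of_subset_of_nonneg S.subset_univ fun _ _ _ => sq_nonneg _) hL
    _ ≤ L * ∑ k, √(∑ j ∈ F k, (w j - clusterMean F w k) ^ 2) *
          √(∑ j ∈ F k, ∑ i, (X j i - μ k i) ^ 2) := by
        gcongr
        exact (sqrt_sum_sq_sum_le _ _).trans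
          (sum_le_sum fun k _ => sqrt_sum_sq_sum_mul_le _ _ _ _)
    _ ≤ _ := by
        rw [mul_assoc]
        gcongr L * ?_
        simp only [mul_sum]
        gcongr with k
        exact le_sup' (fun k => √(∑ j ∈ F k, (w j - clusterMean F w k) ^ 2)) (mem_univ k)
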